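/- A non-cyclic group contains at least one non-power subgroup: if every subgroup of a group G is of the form G^m for some non-negative integer m, then G is cyclic. -/

import Mathlib

/-!
Every power subgroup is characteristic, so every cyclic subgroup is normal and the commutator
`c = ⁅y, x⁆` lies in `⟨x⟩ ∩ ⟨y⟩`; in particular `c` commutes with `x` and `y`, and
`⁅y ^ i, x ^ j⁆ = c ^ (i * j)`. If `⟨x⟩ = G^a`, then `y ^ a ∈ ⟨x⟩` commutes with `x`,
so `c ^ a = 1`.

If some `g` has infinite order, `G` is torsion-free (a finite cyclic subgroup `G^b` would contain
`g ^ b`), hence abelian, and `t ↦ t ^ a` embeds `G` into the cyclic group `⟨g⟩ = G^a`.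

Otherwise `G` has a finite exponent `n`. For a prime `p`, with `n₀` the `p'`-part of `n`, the
cyclic subgroups generated by `p`-elements are all of the form `G^(p^α n₀)`, so they form a chain
and commute. Taking `p` to divide the order of `c`, the `p`-elements `x ^ n₀`, `y ^ n₀` commute,
so `c ^ (n₀ * n₀) = 1`, which is impossible unless `c = 1`. Finally, in the abelian group `G` an
element `g` of order `n` generates `G^d` with `d ∣ n`; writing `g = h ^ d` forces `d = 1`.
-/

/-- `G^m`: the subgroup generated by all `m`-th powers of elements of `G`. -/
def powerSubgroup (G : Type*) [Group G] (m : ℕ) : Subgroup G :=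
  Subgroup.closure (Set.range fun g : G => g ^ m)

open Subgroup
open scoped commutatorElement

section PowerSubgroup

variable {G : Type*} [Group G]

def IsPowerSubgroup (H : Subgroup G) : Prop := ∃ m : ℕ, H = powerSubgroup G m

theorem pow_mem_powerSubgroup (g : G) (m : ℕ) : g ^ m ∈ powerSubgroup G m :=
  subset_closure ⟨g, rfl⟩

theorem powerSubgroup_le_iff {m : ℕ} {H : Subgroup G} :
    powerSubgroup G m ≤ H ↔ ∀ g : G, g ^ m ∈ H := by
  rw [powerSubgroup, closure_le, Set.range_subset_iff]
  rfl

theorem powerSubgroup_zero : powerSubgroup G 0 = ⊥ := by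
  simp [powerSubgroup]

theorem powerSubgroup_one : powerSubgroup G 1 = ⊤ := by
  simp [powerSubgroup]

theorem powerSubgroup_le_of_dvd {a b : ℕ} (hab : a ∣ b) :
    powerSubgroup G b ≤ powerSubgroup G a := by
  obtain ⟨c, rfl⟩ := hab
  refine powerSubgroup_le_iff.mpr fun g => ?_
  simpa only [pow_mul] using pow_mem (pow_mem_powerSubgroup g a) c

instance powerSubgroup_characteristic (m : ℕ) : (powerSubgroup G m).Characteristic := by
  refine characteristic_iff_map_le.mpr fun ϕ => ?_
  rw [map_le_iff_le_comap, powerSubgroup_le_iff]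
  intro g
  simpa using pow_mem_powerSubgroup (ϕ g) m

theorem powerSubgroup_gcd {n : ℕ} (hn : ∀ g : G, g ^ n = 1) (a : ℕ) :
    powerSubgroup G (a.gcd n) = powerSubgroup G a := by
  refine le_antisymm (powerSubgroup_le_iff.mpr fun g => ?_)
    (powerSubgroup_le_of_dvd (Nat.gcd_dvd_left a n))
  have hgcd : g ^ a.gcd n = (g ^ a) ^ a.gcdA n * (g ^ n) ^ a.gcdB n := by
    rw [← zpow_natCast, Nat.gcd_eq_gcd_ab, zpow_add, zpow_mul, zpow_mul, zpow_natCast,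
      zpow_natCast]
  rw [hgcd, hn, one_zpow, mul_one]
  exact zpow_mem (pow_mem_powerSubgroup g a) _

theorem powerSubgroup_mul_eq_of_coprime {a m : ℕ}
    (h : ∀ z ∈ powerSubgroup G a, (orderOf z).Coprime m) :
    powerSubgroup G (a * m) = powerSubgroup G a := by
  refine le_antisymm (powerSubgroup_le_of_dvd (dvd_mul_right a m))
    (powerSubgroup_le_iff.mpr fun g => ?_)
  obtain ⟨k, hk⟩ := exists_pow_eq_self_of_coprime (h _ (pow_mem_powerSubgroup g a)).symm
  rw [← hk, ← pow_mul g a m]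
  exact pow_mem (pow_mem_powerSubgroup g _) k

theorem mem_powerSubgroup_iff {G : Type*} [CommGroup G] {m : ℕ} {g : G} :
    g ∈ powerSubgroup G m ↔ ∃ h : G, h ^ m = g := by
  refine ⟨fun hg => ?_, fun ⟨h, hh⟩ => hh ▸ pow_mem_powerSubgroup h m⟩
  have hle : powerSubgroup G m ≤ (powMonoidHom m : G →* G).range :=
    powerSubgroup_le_iff.mpr fun h => ⟨h, rfl⟩
  exact hle hg

theorem IsPowerSubgroup.normal {H : Subgroup G} (hH : IsPowerSubgroup H) : H.Normal := by
  obtain ⟨m, rfl⟩ := hH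
  infer_instance

end PowerSubgroup

section Commutator

variable {G : Type*} [Group G]

theorem commute_of_mem_zpowers {g x : G} (h : g ∈ zpowers x) : Commute g x := by
  obtain ⟨k, rfl⟩ := mem_zpowers_iff.mp h
  exact (Commute.refl x).zpow_left k

theorem commutatorElement_pow_right {a b : G} (h : Commute ⁅a, b⁆ b) (n : ℕ) :
    ⁅a, b ^ n⁆ = ⁅a, b⁆ ^ n := by
  have hconj : a * b * a⁻¹ = ⁅a, b⁆ * b := by group
  rw [commutatorElement_def a, ← conj_pow, hconj, h.mul_pow, mul_inv_cancel_right]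

theorem commutatorElement_pow_left {a b : G} (h : Commute ⁅a, b⁆ a) (n : ℕ) :
    ⁅a ^ n, b⁆ = ⁅a, b⁆ ^ n := by
  rw [← commutatorElement_inv, ← commutatorElement_inv b a,
    commutatorElement_pow_right (by rwa [← commutatorElement_inv, Commute.inv_left_iff]), inv_pow]

theorem commutatorElement_pow_pow {a b : G} (ha : Commute ⁅a, b⁆ a) (hb : Commute ⁅a, b⁆ b)
    (m n : ℕ) : ⁅a ^ m, b ^ n⁆ = ⁅a, b⁆ ^ (m * n) := by
  rw [commutatorElement_pow_right (by rw [commutatorElement_pow_left ha]; exact hb.pow_left m),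
    commutatorElement_pow_left ha, pow_mul]

end Commutator

section CyclicSubgroupsPower

variable {G : Type*} [Group G]

theorem ne_zero_of_zpowers_eq_powerSubgroup {x : G} {a : ℕ} (hx : x ≠ 1)
    (h : zpowers x = powerSubgroup G a) : a ≠ 0 := by
  rintro rfl
  rw [powerSubgroup_zero, zpowers_eq_bot] at h
  exact hx h

theorem commutatorElement_mem_zpowers_inf (hG : ∀ x : G, IsPowerSubgroup (zpowers x)) (x y : G) :
    ⁅x, y⁆ ∈ zpowers x ⊓ zpowers y := by
  have := (hG x).normal
  have := (hG y).normal
  exact commutator_le_inf _ _ (commutator_mem_commutator (mem_zpowers x) (mem_zpowers y))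

theorem commutatorElement_pow_eq_one (hG : ∀ x : G, IsPowerSubgroup (zpowers x)) {x : G} {a : ℕ}
    (hx : zpowers x = powerSubgroup G a) (y : G) : ⁅y, x⁆ ^ a = 1 := by
  have hcy := commute_of_mem_zpowers (mem_inf.mp (commutatorElement_mem_zpowers_inf hG y x)).1
  rw [← commutatorElement_pow_left hcy, commutatorElement_eq_one_iff_commute]
  exact commute_of_mem_zpowers (hx ▸ pow_mem_powerSubgroup y a)

theorem eq_one_of_isOfFinOrder (hG : ∀ x : G, IsPowerSubgroup (zpowers x)) {g : G}
    (hg : ¬IsOfFinOrder g) {t : G} (ht : IsOfFinOrder t) : t = 1 := by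
  by_contra ht1
  obtain ⟨b, hb⟩ := hG t
  have hgb : IsOfFinOrder (g ^ b) := ht.of_mem_zpowers (hb ▸ pow_mem_powerSubgroup g b)
  exact hg (hgb.of_pow (ne_zero_of_zpowers_eq_powerSubgroup ht1 hb))

theorem commute_of_not_isOfFinOrder (hG : ∀ x : G, IsPowerSubgroup (zpowers x)) {g : G}
    (hg : ¬IsOfFinOrder g) (x y : G) : Commute x y := by
  obtain rfl | hx := eq_or_ne x 1
  · exact Commute.one_left y
  obtain ⟨a, hxa⟩ := hG x
  have ha := ne_zero_of_zpowers_eq_powerSubgroup hx hxa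
  have hca : ⁅y, x⁆ ^ a = 1 := commutatorElement_pow_eq_one hG hxa y
  have hc : ⁅y, x⁆ = 1 := eq_one_of_isOfFinOrder hG hg
    (isOfFinOrder_iff_pow_eq_one.mpr ⟨a, Nat.pos_of_ne_zero ha, hca⟩)
  exact (commutatorElement_eq_one_iff_commute.mp hc).symm

theorem isCyclic_of_not_isOfFinOrder {G : Type*} [CommGroup G]
    (hG : ∀ x : G, IsPowerSubgroup (zpowers x)) {g : G} (hg : ¬IsOfFinOrder g) : IsCyclic G := by
  obtain ⟨a, hga⟩ := hG g
  have ha := ne_zero_of_zpowers_eq_powerSubgroup (by rintro rfl; exact hg IsOfFinOrder.one) hga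
  let f : G →* zpowers g :=
    (powMonoidHom a).codRestrict _ fun t => hga ▸ pow_mem_powerSubgroup t a
  refine isCyclic_of_injective f ((injective_iff_map_eq_one f).mpr fun t ht => ?_)
  exact eq_one_of_isOfFinOrder hG hg
    (isOfFinOrder_iff_pow_eq_one.mpr ⟨a, Nat.pos_of_ne_zero ha, congrArg Subtype.val ht⟩)

theorem exponentExists_of_isOfFinOrder (hG : ∀ x : G, IsPowerSubgroup (zpowers x))
    (htor : ∀ g : G, IsOfFinOrder g) : Monoid.ExponentExists G := by
  rcases subsingleton_or_nontrivial G with _ | _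
  · exact ⟨1, one_pos, fun g => Subsingleton.elim _ _⟩
  obtain ⟨x, hx⟩ := exists_ne (1 : G)
  obtain ⟨a, hxa⟩ := hG x
  have ha := ne_zero_of_zpowers_eq_powerSubgroup hx hxa
  refine ⟨a * orderOf x, Nat.mul_pos (Nat.pos_of_ne_zero ha) (htor x).orderOf_pos, fun g => ?_⟩
  rw [pow_mul, ← orderOf_dvd_iff_pow_eq_one]
  exact orderOf_dvd_of_mem_zpowers (hxa ▸ pow_mem_powerSubgroup g a)

theorem exists_zpowers_eq_powerSubgroup_pow_mul_ordCompl
    (hG : ∀ x : G, IsPowerSubgroup (zpowers x)) {n : ℕ} (hn : ∀ g : G, g ^ n = 1) (hn0 : n ≠ 0)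
    {p i : ℕ} (hp : p.Prime) {x : G} (hx : x ^ p ^ i = 1) :
    ∃ α : ℕ, zpowers x = powerSubgroup G (p ^ α * ordCompl[p] n) := by
  obtain ⟨a, hxa⟩ := hG x
  rw [← powerSubgroup_gcd hn] at hxa
  obtain ⟨m, hm⟩ := Nat.ordCompl_dvd_ordCompl_of_dvd (Nat.gcd_dvd_right a n) p
  have hpm : ¬p ∣ m := fun h => Nat.not_dvd_ordCompl hp hn0 (hm ▸ dvd_mul_of_dvd_right h _)
  refine ⟨(a.gcd n).factorization p, ?_⟩
  rw [hm, ← mul_assoc, Nat.ordProj_mul_ordCompl_eq_self, hxa]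
  refine (powerSubgroup_mul_eq_of_coprime fun z hz => ?_).symm
  have hzp : orderOf z ∣ p ^ i :=
    (orderOf_dvd_of_mem_zpowers (hxa ▸ hz)).trans (orderOf_dvd_of_pow_eq_one hx)
  exact Nat.Coprime.coprime_dvd_left hzp ((hp.coprime_iff_not_dvd.mpr hpm).pow_left i)

theorem commute_of_pow_prime_pow_eq_one
    (hG : ∀ x : G, IsPowerSubgroup (zpowers x)) {n : ℕ} (hn : ∀ g : G, g ^ n = 1) (hn0 : n ≠ 0)
    {p i j : ℕ} (hp : p.Prime) {x y : G} (hx : x ^ p ^ i = 1) (hy : y ^ p ^ j = 1) :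
    Commute x y := by
  obtain ⟨α, hxα⟩ := exists_zpowers_eq_powerSubgroup_pow_mul_ordCompl hG hn hn0 hp hx
  obtain ⟨β, hyβ⟩ := exists_zpowers_eq_powerSubgroup_pow_mul_ordCompl hG hn hn0 hp hy
  have hchain {γ δ : ℕ} (h : γ ≤ δ) :
      powerSubgroup G (p ^ δ * ordCompl[p] n) ≤ powerSubgroup G (p ^ γ * ordCompl[p] n) :=
    powerSubgroup_le_of_dvd (Nat.mul_dvd_mul_right (pow_dvd_pow p h) _)
  rcases le_total α β with h | h
  · have hyx : y ∈ zpowers x := hxα ▸ hchain h (hyβ ▸ mem_zpowers y)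
    exact (commute_of_mem_zpowers hyx).symm
  · have hxy : x ∈ zpowers y := hyβ ▸ hchain h (hxα ▸ mem_zpowers x)
    exact commute_of_mem_zpowers hxy

theorem commute_of_exponentExists (hG : ∀ x : G, IsPowerSubgroup (zpowers x))
    (hexp : Monoid.ExponentExists G) (x y : G) : Commute x y := by
  set n := Monoid.exponent G
  have hn0 : n ≠ 0 := hexp.exponent_ne_zero
  by_contra hxy
  have hc : orderOf ⁅x, y⁆ ≠ 1 := by
    rwa [Ne, orderOf_eq_one_iff, commutatorElement_eq_one_iff_commute]
  obtain ⟨p, hp, hpc⟩ := Nat.exists_prime_and_dvd hc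
  have hpow : ∀ g : G, (g ^ ordCompl[p] n) ^ p ^ n.factorization p = 1 := fun g => by
    rw [← pow_mul, mul_comm, Nat.ordProj_mul_ordCompl_eq_self, Monoid.pow_exponent_eq_one]
  have hcomm := commute_of_pow_prime_pow_eq_one hG Monoid.pow_exponent_eq_one hn0 hp
    (hpow x) (hpow y)
  have hmem := commutatorElement_mem_zpowers_inf hG x y
  rw [← commutatorElement_eq_one_iff_commute, commutatorElement_pow_pow
    (commute_of_mem_zpowers (mem_inf.mp hmem).1) (commute_of_mem_zpowers (mem_inf.mp hmem).2),
    ← orderOf_dvd_iff_pow_eq_one] at hcomm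
  exact Nat.not_dvd_ordCompl hp hn0 ((hp.dvd_mul.mp (hpc.trans hcomm)).elim id id)

theorem isCyclic_of_exponentExists {G : Type*} [CommGroup G]
    (hG : ∀ x : G, IsPowerSubgroup (zpowers x)) (hexp : Monoid.ExponentExists G) :
    IsCyclic G := by
  obtain ⟨g, hg⟩ := Monoid.exists_orderOf_eq_exponent hexp
  obtain ⟨a, hga⟩ := hG g
  rw [← powerSubgroup_gcd Monoid.pow_exponent_eq_one] at hga
  set d := a.gcd (Monoid.exponent G)
  obtain ⟨h, hh⟩ := mem_powerSubgroup_iff.mp (hga ▸ mem_zpowers g)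
  have hd : d = 1 := by
    have hdN : d ∣ Monoid.exponent G := Nat.gcd_dvd_right a _
    have hN : orderOf g ∣ Monoid.exponent G / d := by
      rw [orderOf_dvd_iff_pow_eq_one, ← hh, ← pow_mul, Nat.mul_div_cancel' hdN,
        Monoid.pow_exponent_eq_one]
    rw [hg, Nat.dvd_div_iff_mul_dvd hdN] at hN
    exact Nat.dvd_one.mp (Nat.dvd_of_mul_dvd_mul_right hexp.exponent_pos (by simpa using hN))
  exact isCyclic_iff_exists_zpowers_eq_top.mpr ⟨g, by rw [hga, hd, powerSubgroup_one]⟩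

end CyclicSubgroupsPower

theorem cyclic_of_all_subgroups_power {G : Type*} [Group G]
    (h : ∀ H : Subgroup G, ∃ m : ℕ, H = powerSubgroup G m) : IsCyclic G := by
  have hG : ∀ x : G, IsPowerSubgroup (zpowers x) := fun x => h _
  by_cases htor : ∀ g : G, IsOfFinOrder g
  · have hexp := exponentExists_of_isOfFinOrder hG htor
    let : CommGroup G := { mul_comm := fun x y => (commute_of_exponentExists hG hexp x y).eq }
    exact isCyclic_of_exponentExists hG hexp
  · obtain ⟨g, hg⟩ := not_forall.mp htor
    let : CommGroup G := { mul_comm := fun x y => (commute_of_not_isOfFinOrder hG hg x y).eq }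
    exact isCyclic_of_not_isOfFinOrder hG hg
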